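/- arXiv:1609.04348 — 4 statements merged into one kernel-verified Lean document; each statement's English description precedes it below -/
import Mathlib

section
/- The function ψ(z) = e^{-z²/2} z (2z²+3)/(2z²+1) satisfies ψ''(z) + (V(z) + 5)ψ(z) = 0 where V(z) = -z² - 2 - 8/(2z²+1) + 16/(2z²+1)². -/
/-! Writing ψ = e^{-z²/2} g with g(z) = z (2z²+3)/(2z²+1), the Gaussian factor turns
ψ'' into e^{-z²/2} (g'' - 2z g' + (z² - 1) g), so the equation reduces to an identity
between rational functions of z. -/

open Real

theorem hasDerivAt_exp_neg_sq_half_mul {g : ℝ → ℝ} {g' z : ℝ} (hg : HasDerivAt g g' z) :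
    HasDerivAt (fun x => exp (-x ^ 2 / 2) * g x) (exp (-z ^ 2 / 2) * (g' - z * g z)) z := by
  have hexp : HasDerivAt (fun x : ℝ => exp (-x ^ 2 / 2)) (exp (-z ^ 2 / 2) * (-z)) z := by
    refine ((hasDerivAt_pow 2 z).neg.div_const 2).exp.congr_deriv ?_
    simp only [Pi.neg_apply]
    ring
  exact (hexp.mul hg).congr_deriv (by ring)

theorem deriv_deriv_exp_neg_sq_half_mul {g g' : ℝ → ℝ} {g'' z : ℝ}
    (hg : ∀ x, HasDerivAt g (g' x) x) (hg' : HasDerivAt g' g'' z) :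
    deriv (deriv fun x => exp (-x ^ 2 / 2) * g x) z =
      exp (-z ^ 2 / 2) * (g'' - 2 * z * g' z + (z ^ 2 - 1) * g z) := by
  have hderiv : deriv (fun x => exp (-x ^ 2 / 2) * g x) =
      fun x => exp (-x ^ 2 / 2) * (g' x - x * g x) :=
    funext fun x => (hasDerivAt_exp_neg_sq_half_mul (hg x)).deriv
  rw [hderiv]
  have hh : HasDerivAt (fun x => g' x - x * g x) (g'' - (1 * g z + z * g' z)) z :=
    hg'.sub ((hasDerivAt_id z).mul (hg z))
  rw [(hasDerivAt_exp_neg_sq_half_mul hh).deriv]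
  ring

theorem hasDerivAt_mul_two_sq_add_three_div (z : ℝ) :
    HasDerivAt (fun x : ℝ => x * (2 * x ^ 2 + 3) / (2 * x ^ 2 + 1))
      ((4 * z ^ 4 + 3) / (2 * z ^ 2 + 1) ^ 2) z := by
  have hq : 2 * z ^ 2 + 1 ≠ 0 := by positivity
  have hnum := (hasDerivAt_id z).mul (((hasDerivAt_pow 2 z).const_mul 2).add_const 3)
  have hden := ((hasDerivAt_pow 2 z).const_mul 2).add_const 1
  refine (hnum.div hden hq).congr_deriv ?_
  simp only [Pi.mul_apply, id_eq]
  field_simp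
  ring

theorem hasDerivAt_four_pow_four_add_three_div (z : ℝ) :
    HasDerivAt (fun x : ℝ => (4 * x ^ 4 + 3) / (2 * x ^ 2 + 1) ^ 2)
      ((16 * z ^ 3 - 24 * z) / (2 * z ^ 2 + 1) ^ 3) z := by
  have hq : 2 * z ^ 2 + 1 ≠ 0 := by positivity
  have hnum := ((hasDerivAt_pow 4 z).const_mul 4).add_const 3
  have hden := (((hasDerivAt_pow 2 z).const_mul 2).add_const 1).pow 2
  refine (hnum.div hden (pow_ne_zero 2 hq)).congr_deriv ?_
  simp only [Pi.pow_apply]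
  field_simp
  ring

theorem schroedinger_anharmonic_E_5
    (V ψ : ℝ → ℝ)
    (hV : ∀ z, V z = -z^2 - 2 - 8/(2*z^2+1) + 16/(2*z^2+1)^2)
    (hψ : ∀ z, ψ z = Real.exp (-z^2/2) * z * (2*z^2+3) / (2*z^2+1)) :
    ∀ z : ℝ, deriv (deriv ψ) z + (V z + 5) * ψ z = 0 := by
  intro z
  have hψ_eq : ψ = fun x => exp (-x ^ 2 / 2) * (x * (2 * x ^ 2 + 3) / (2 * x ^ 2 + 1)) :=
    funext fun x => by rw [hψ]; ring
  rw [hψ_eq, deriv_deriv_exp_neg_sq_half_mul hasDerivAt_mul_two_sq_add_three_div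
    (hasDerivAt_four_pow_four_add_three_div z), hV]
  have hq : 2 * z ^ 2 + 1 ≠ 0 := by positivity
  field_simp
  ring
end

section
/- The function ψ(z) = e^{-z²/2}(4z⁴+4z²-1)/(2z²+1) satisfies ψ''(z) + (V(z) + 7)ψ(z) = 0 where V(z) = -z² - 2 - 8/(2z²+1) + 16/(2z²+1)². -/
/-!
Write `ψ = e^{-z²/2} r` with `r = u - 2/u`, `u = 2z² + 1` (since `4z⁴ + 4z² - 1 = u² - 2`).
Conjugating by the Gaussian turns `ψ'' + (V + 7) ψ = 0` into
`r'' - 2z r' + (z² + 6 + V) r = 0`, an identity between rational functions of `z`.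
-/

open Real

section GaussianConjugation

variable {f f' f'' : ℝ → ℝ}

theorem hasDerivAt_exp_neg_sq_div_two_mul {x d : ℝ} (hf : HasDerivAt f d x) :
    HasDerivAt (fun z => exp (-z ^ 2 / 2) * f z) (exp (-x ^ 2 / 2) * (d - x * f x)) x := by
  have hexp : HasDerivAt (fun z : ℝ => exp (-z ^ 2 / 2)) (exp (-x ^ 2 / 2) * -x) x := by
    refine ((hasDerivAt_pow 2 x).fun_neg.div_const 2).exp.congr_deriv ?_
    push_cast
    ring
  refine (hexp.fun_mul hf).congr_deriv ?_
  ring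

theorem deriv_deriv_exp_neg_sq_div_two_mul (hf : ∀ x, HasDerivAt f (f' x) x)
    (hf' : ∀ x, HasDerivAt f' (f'' x) x) (x : ℝ) :
    deriv (deriv fun z => exp (-z ^ 2 / 2) * f z) x =
      exp (-x ^ 2 / 2) * (f'' x - 2 * x * f' x + (x ^ 2 - 1) * f x) := by
  have hderiv : deriv (fun z => exp (-z ^ 2 / 2) * f z) =
      fun z => exp (-z ^ 2 / 2) * (f' z - z * f z) :=
    funext fun z => (hasDerivAt_exp_neg_sq_div_two_mul (hf z)).deriv
  have hg : HasDerivAt (fun z => f' z - z * f z) (f'' x - (f x + x * f' x)) x := by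
    simpa using (hf' x).fun_sub ((hasDerivAt_id' x).fun_mul (hf x))
  rw [hderiv, (hasDerivAt_exp_neg_sq_div_two_mul hg).deriv]
  ring

end GaussianConjugation

theorem hasDerivAt_two_mul_sq_add_one (x : ℝ) :
    HasDerivAt (fun z : ℝ => 2 * z ^ 2 + 1) (4 * x) x := by
  refine (((hasDerivAt_pow 2 x).const_mul 2).add_const 1).congr_deriv ?_
  push_cast
  ring

theorem hasDerivAt_sub_two_div (x : ℝ) :
    HasDerivAt (fun z : ℝ => 2 * z ^ 2 + 1 - 2 / (2 * z ^ 2 + 1))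
      (4 * x + 8 * x / (2 * x ^ 2 + 1) ^ 2) x := by
  have hu := hasDerivAt_two_mul_sq_add_one x
  have hu0 : 2 * x ^ 2 + 1 ≠ 0 := by positivity
  refine (hu.fun_sub ((hasDerivAt_const x (2 : ℝ)).fun_div hu hu0)).congr_deriv ?_
  field_simp
  ring

theorem hasDerivAt_add_div_sq (x : ℝ) :
    HasDerivAt (fun z : ℝ => 4 * z + 8 * z / (2 * z ^ 2 + 1) ^ 2)
      (4 + 8 / (2 * x ^ 2 + 1) ^ 2 - 64 * x ^ 2 / (2 * x ^ 2 + 1) ^ 3) x := by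
  have hu0 : 2 * x ^ 2 + 1 ≠ 0 := by positivity
  have hid := hasDerivAt_id' x
  refine ((hid.const_mul 4).fun_add ((hid.const_mul 8).fun_div
    ((hasDerivAt_two_mul_sq_add_one x).fun_pow 2) (pow_ne_zero 2 hu0))).congr_deriv ?_
  field_simp
  ring

theorem schroedinger_anharmonic_E_7
    (V ψ : ℝ → ℝ)
    (hV : ∀ z, V z = -z^2 - 2 - 8/(2*z^2+1) + 16/(2*z^2+1)^2)
    (hψ : ∀ z, ψ z = Real.exp (-z^2/2) * (4*z^4+4*z^2-1) / (2*z^2+1)) :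
    ∀ z : ℝ, deriv (deriv ψ) z + (V z + 7) * ψ z = 0 := by
  have hψ_eq : ψ = fun z => exp (-z ^ 2 / 2) * (2 * z ^ 2 + 1 - 2 / (2 * z ^ 2 + 1)) := by
    funext z
    have hu0 : 2 * z ^ 2 + 1 ≠ 0 := by positivity
    rw [hψ]
    field_simp
    ring
  intro z
  have hu0 : 2 * z ^ 2 + 1 ≠ 0 := by positivity
  rw [hψ_eq, deriv_deriv_exp_neg_sq_div_two_mul hasDerivAt_sub_two_div hasDerivAt_add_div_sq,
    hV]
  field_simp
  ring
end

section
/- The function ψ(z) = e^{-z/4} z (z³+6z²+18z+24)/(z²+2z+2) satisfies ψ''(z) + (V(z) - 1/16)ψ(z) = 0 for all real z ≠ 0, where V(z) = 1/z - 4/(z²+2z+2) + 8/(z²+2z+2)². -/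
/-!
Write `q z = z² + 2z + 2 = (z + 1)² + 1`, which never vanishes on `ℝ`. Both derivatives of
`ψ` are again of the form `exp (-z/4) · polynomial / q zᵏ`, and after clearing the denominator
`z · q z³` the equation `ψ'' + (V - 1/16) ψ = 0` becomes a polynomial identity.
-/

theorem HasDerivAt.exp_mul_div {f p q : ℝ → ℝ} {f' p' q' z : ℝ} (hf : HasDerivAt f f' z)
    (hp : HasDerivAt p p' z) (hq : HasDerivAt q q' z) (hqz : q z ≠ 0) :
    HasDerivAt (fun x => Real.exp (f x) * p x / q x)
      (Real.exp (f z) * ((f' * p z + p') * q z - p z * q') / q z ^ 2) z :=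
  (hf.exp.fun_mul hp).fun_div hq hqz |>.congr_deriv (by ring)

namespace SchroedingerFusion

theorem quadratic_pos (z : ℝ) : 0 < z ^ 2 + 2 * z + 2 := by
  nlinarith [sq_nonneg (z + 1)]

theorem hasDerivAt_quadratic (z : ℝ) :
    HasDerivAt (fun x : ℝ => x ^ 2 + 2 * x + 2) (2 * z + 2) z :=
  ((hasDerivAt_pow 2 z).fun_add ((hasDerivAt_id' z).const_mul 2)).add_const 2
    |>.congr_deriv (by norm_num)

theorem hasDerivAt_neg_div_four (z : ℝ) : HasDerivAt (fun x : ℝ => -x / 4) (-(1 / 4)) z :=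
  (hasDerivAt_id' z).fun_neg.div_const 4 |>.congr_deriv (by ring)

noncomputable def psi (z : ℝ) : ℝ :=
  Real.exp (-z / 4) * z * (z ^ 3 + 6 * z ^ 2 + 18 * z + 24) / (z ^ 2 + 2 * z + 2)

noncomputable def psiDeriv (z : ℝ) : ℝ :=
  Real.exp (-z / 4) * (-(1 / 4) * z ^ 6 + 4 * z ^ 4 + 14 * z ^ 3 + 27 * z ^ 2 + 60 * z + 48) /
    (z ^ 2 + 2 * z + 2) ^ 2

noncomputable def psiDeriv2 (z : ℝ) : ℝ :=
  Real.exp (-z / 4) * ((1 / 16) * z ^ 8 - (3 / 8) * z ^ 7 - (23 / 8) * z ^ 6 - (17 / 2) * z ^ 5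
    - (55 / 4) * z ^ 4 - (59 / 2) * z ^ 3 - (303 / 2) * z ^ 2 - 258 * z - 96) /
    (z ^ 2 + 2 * z + 2) ^ 3

theorem hasDerivAt_psi (z : ℝ) : HasDerivAt psi (psiDeriv z) z := by
  have hnum : HasDerivAt (fun x : ℝ => x * (x ^ 3 + 6 * x ^ 2 + 18 * x + 24))
      (4 * z ^ 3 + 18 * z ^ 2 + 36 * z + 24) z :=
    (hasDerivAt_id' z).fun_mul ((((hasDerivAt_pow 3 z).fun_add
      ((hasDerivAt_pow 2 z).const_mul 6)).fun_add ((hasDerivAt_id' z).const_mul 18)).add_const 24)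
      |>.congr_deriv (by norm_num; ring)
  have hden := (quadratic_pos z).ne'
  have hpsi : psi = fun x => Real.exp (-x / 4) * (x * (x ^ 3 + 6 * x ^ 2 + 18 * x + 24)) /
      (x ^ 2 + 2 * x + 2) := funext fun x => by rw [psi, mul_assoc]
  rw [hpsi]
  refine (hasDerivAt_neg_div_four z).exp_mul_div hnum (hasDerivAt_quadratic z) hden
    |>.congr_deriv ?_
  rw [psiDeriv, div_eq_div_iff (pow_ne_zero 2 hden) (pow_ne_zero 2 hden)]
  ring

theorem hasDerivAt_psiDeriv (z : ℝ) : HasDerivAt psiDeriv (psiDeriv2 z) z := by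
  have hnum : HasDerivAt
      (fun x : ℝ => -(1 / 4) * x ^ 6 + 4 * x ^ 4 + 14 * x ^ 3 + 27 * x ^ 2 + 60 * x + 48)
      (-(3 / 2) * z ^ 5 + 16 * z ^ 3 + 42 * z ^ 2 + 54 * z + 60) z :=
    (((((hasDerivAt_pow 6 z).const_mul (-(1 / 4) : ℝ)).fun_add
      ((hasDerivAt_pow 4 z).const_mul 4)).fun_add ((hasDerivAt_pow 3 z).const_mul 14)).fun_add
      ((hasDerivAt_pow 2 z).const_mul 27)).fun_add ((hasDerivAt_id' z).const_mul 60)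
      |>.add_const 48 |>.congr_deriv (by norm_num; ring)
  have hden := (quadratic_pos z).ne'
  refine (hasDerivAt_neg_div_four z).exp_mul_div hnum ((hasDerivAt_quadratic z).fun_pow 2)
    (pow_ne_zero 2 hden) |>.congr_deriv ?_
  rw [psiDeriv2, div_eq_div_iff (pow_ne_zero 2 (pow_ne_zero 2 hden)) (pow_ne_zero 3 hden)]
  ring

theorem psiDeriv2_add_potential_mul_psi {z : ℝ} (hz : z ≠ 0) :
    psiDeriv2 z + (1 / z - 4 / (z ^ 2 + 2 * z + 2) + 8 / (z ^ 2 + 2 * z + 2) ^ 2 - 1 / 16) *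
      psi z = 0 := by
  have hden := (quadratic_pos z).ne'
  -- `field_simp` puts the quadratic into Horner form before looking for its nonvanishing
  have hden' : z * (z + 2) + 2 ≠ 0 := by convert hden using 1; ring
  rw [psi, psiDeriv2]
  field_simp
  ring

end SchroedingerFusion

open SchroedingerFusion in
theorem schroedinger_fusion_E_neg_sixteenth
    (V ψ : ℝ → ℝ)
    (hV : ∀ z, z ≠ 0 → V z = 1/z - 4/(z^2+2*z+2) + 8/(z^2+2*z+2)^2)
    (hψ : ∀ z, ψ z = Real.exp (-z/4) * z * (z^3+6*z^2+18*z+24) / (z^2+2*z+2)) :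
    ∀ z : ℝ, z ≠ 0 → deriv (deriv ψ) z + (V z - 1/16) * ψ z = 0 := by
  obtain rfl : ψ = psi := funext hψ
  have hderiv : deriv psi = psiDeriv := funext fun z => (hasDerivAt_psi z).deriv
  intro z hz
  rw [hderiv, (hasDerivAt_psiDeriv z).deriv, hV z hz]
  exact psiDeriv2_add_potential_mul_psi hz
end

section
/- The function ψ(z) = e^{-z/6} z (z⁴-4z³-40z²-144z-216)/(z²+2z+2) satisfies ψ''(z) + (V(z) - 1/36)ψ(z) = 0 for all real z ≠ 0, where V(z) = 1/z - 4/(z²+2z+2) + 8/(z²+2z+2)². -/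
/-!
Writing `ψ z = exp (a z) g z` turns `ψ'' + (V - a²) ψ` into `exp (a z) (g'' + 2 a g' + V g)`,
so with `a = -1/6` the energy `-1/36` is absorbed and it remains to check that the rational
function `g = z (z⁴ - 4z³ - 40z² - 144z - 216) / (z² + 2z + 2)` solves `g'' - g'/3 + V g = 0`.
After clearing the denominator `z (z² + 2z + 2)³` this is a polynomial identity.
-/

open Real

section ExpMul

variable {g g' g'' : ℝ → ℝ} (a : ℝ)

theorem hasDerivAt_exp_mul_mul {x : ℝ} (hg : HasDerivAt g (g' x) x) :
    HasDerivAt (fun z => exp (a * z) * g z) (exp (a * x) * (g' x + a * g x)) x := by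
  have hexp : HasDerivAt (fun z => exp (a * z)) (exp (a * x) * a) x := by
    simpa using ((hasDerivAt_id x).const_mul a).exp
  exact (hexp.mul hg).congr_deriv (by ring)

theorem deriv_deriv_exp_mul_mul (hg : ∀ x, HasDerivAt g (g' x) x)
    (hg' : ∀ x, HasDerivAt g' (g'' x) x) (x : ℝ) :
    deriv (deriv fun z => exp (a * z) * g z) x
      = exp (a * x) * (g'' x + 2 * a * g' x + a ^ 2 * g x) := by
  have hderiv : deriv (fun z => exp (a * z) * g z) = fun z => exp (a * z) * (g' z + a * g z) :=
    funext fun z => (hasDerivAt_exp_mul_mul a (hg z)).deriv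
  rw [hderiv, (hasDerivAt_exp_mul_mul a (g := fun z => g' z + a * g z)
    (g' := fun z => g'' z + a * g' z) ((hg' x).add ((hg x).const_mul a))).deriv]
  ring

theorem deriv_deriv_add_mul_eq_zero_of_exp_mul {W : ℝ → ℝ} (hg : ∀ x, HasDerivAt g (g' x) x)
    (hg' : ∀ x, HasDerivAt g' (g'' x) x) {z : ℝ}
    (hgauge : g'' z + 2 * a * g' z + W z * g z = 0) :
    deriv (deriv fun x => exp (a * x) * g x) z + (W z - a ^ 2) * (exp (a * z) * g z) = 0 := by
  rw [deriv_deriv_exp_mul_mul a hg hg']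
  linear_combination exp (a * z) * hgauge

end ExpMul

theorem hasDerivAt_div_deriv {N N' N'' Q Q' Q'' : ℝ → ℝ} (hN : ∀ x, HasDerivAt N (N' x) x)
    (hN' : ∀ x, HasDerivAt N' (N'' x) x) (hQ : ∀ x, HasDerivAt Q (Q' x) x)
    (hQ' : ∀ x, HasDerivAt Q' (Q'' x) x) (hQ0 : ∀ x, Q x ≠ 0) (x : ℝ) :
    HasDerivAt (fun z => (N' z * Q z - N z * Q' z) / Q z ^ 2)
      ((N'' x * Q x ^ 2 - 2 * N' x * Q' x * Q x - N x * Q'' x * Q x + 2 * N x * Q' x ^ 2)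
        / Q x ^ 3) x := by
  refine ((((hN' x).fun_mul (hQ x)).fun_sub ((hN x).fun_mul (hQ' x))).fun_div ((hQ x).fun_pow 2)
    (pow_ne_zero 2 (hQ0 x))).congr_deriv ?_
  have := hQ0 x
  field_simp
  ring

theorem hasDerivAt_fusion_numerator (x : ℝ) :
    HasDerivAt (fun x => x ^ 5 - 4 * x ^ 4 - 40 * x ^ 3 - 144 * x ^ 2 - 216 * x)
      (5 * x ^ 4 - 16 * x ^ 3 - 120 * x ^ 2 - 288 * x - 216) x := by
  refine ((((hasDerivAt_pow 5 x).sub ((hasDerivAt_pow 4 x).const_mul 4)).sub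
    ((hasDerivAt_pow 3 x).const_mul 40)).sub ((hasDerivAt_pow 2 x).const_mul 144)).sub
    ((hasDerivAt_id x).const_mul 216) |>.congr_deriv ?_
  norm_num
  ring

theorem hasDerivAt_fusion_numerator_deriv (x : ℝ) :
    HasDerivAt (fun x => 5 * x ^ 4 - 16 * x ^ 3 - 120 * x ^ 2 - 288 * x - 216)
      (20 * x ^ 3 - 48 * x ^ 2 - 240 * x - 288) x := by
  refine ((((hasDerivAt_pow 4 x).const_mul 5).sub ((hasDerivAt_pow 3 x).const_mul 16)).sub
    ((hasDerivAt_pow 2 x).const_mul 120)).sub ((hasDerivAt_id x).const_mul 288)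
    |>.sub_const 216 |>.congr_deriv ?_
  norm_num
  ring

theorem hasDerivAt_fusion_denominator (x : ℝ) :
    HasDerivAt (fun x => x ^ 2 + 2 * x + 2) (2 * x + 2) x := by
  refine ((hasDerivAt_pow 2 x).add ((hasDerivAt_id x).const_mul 2)).add_const 2 |>.congr_deriv ?_
  norm_num

theorem schroedinger_fusion_E_neg_thirtysixth
    (V ψ : ℝ → ℝ)
    (hV : ∀ z, z ≠ 0 → V z = 1/z - 4/(z^2+2*z+2) + 8/(z^2+2*z+2)^2)
    (hψ : ∀ z, ψ z = Real.exp (-z/6) * z * (z^4-4*z^3-40*z^2-144*z-216) / (z^2+2*z+2)) :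
    ∀ z : ℝ, z ≠ 0 → deriv (deriv ψ) z + (V z - 1/36) * ψ z = 0 := by
  intro z hz
  have hQ_ne (x : ℝ) : x ^ 2 + 2 * x + 2 ≠ 0 := by nlinarith [sq_nonneg (x + 1)]
  have hψ_eq : ψ = fun x => exp (-1/6 * x) *
      ((x ^ 5 - 4 * x ^ 4 - 40 * x ^ 3 - 144 * x ^ 2 - 216 * x) / (x ^ 2 + 2 * x + 2)) := by
    funext x
    rw [hψ, show -x / 6 = -1/6 * x by ring]
    ring
  have hQ' (x : ℝ) : HasDerivAt (fun x => 2 * x + 2) 2 x := by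
    simpa using ((hasDerivAt_id x).const_mul 2).add_const 2
  have hgauge := deriv_deriv_add_mul_eq_zero_of_exp_mul (W := V) (z := z) (-1/6)
    (fun x => (hasDerivAt_fusion_numerator x).fun_div (hasDerivAt_fusion_denominator x) (hQ_ne x))
    (hasDerivAt_div_deriv hasDerivAt_fusion_numerator hasDerivAt_fusion_numerator_deriv
      hasDerivAt_fusion_denominator hQ' hQ_ne) (by
        rw [hV z hz]
        -- `field_simp` rewrites `z ^ 2 + 2 * z + 2` into this Horner form
        have hQz : z * (z + 2) + 2 ≠ 0 := by nlinarith [sq_nonneg (z + 1)]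
        field_simp
        ring)
  rw [hψ_eq]
  norm_num at hgauge ⊢
  exact hgauge
end
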